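/- arXiv:2203.00155 — 6 statements merged into one kernel-verified Lean document; each statement's English description precedes it below -/
import Mathlib

section
/- Let (X, dist) be a metric space, μ a Borel probability measure on X, s ∈ X a point, and d ≥ 1 a real number. Assume μ(B(s,1)) = 1 and the doubling condition at s: for every r > 0 and every ε ∈ (0,1], μ(B(s,r)) ≤ (1/ε)^d · μ(B(s, ε·r)). Then there exists a constant C > 0 (depending only on d) such that for every positive integer m, if X₁, …, X_m are independent samples from μ (i.e., the coordinates of a point drawn from the m-fold product measure μ^m on X^m), the expected minimum distance satisfies E[min_{1 ≤ j ≤ m} dist(s, X_j)] ≤ C · m^(−1/d). -/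
open MeasureTheory Metric Real

lemma measurable_finset_inf'_aux {α ι : Type*} [MeasurableSpace α] (s : Finset ι)
    (hs : s.Nonempty) (g : ι → α → ℝ) (hg : ∀ i, Measurable (g i)) :
    Measurable (fun a => s.inf' hs fun i => g i a) := by
  induction hs using Finset.Nonempty.cons_induction with
  | singleton i => simpa using hg i
  | cons i t hit ht ih =>
      have h : (fun a => (Finset.cons i t hit).inf' (Finset.cons_nonempty hit) fun j => g j a)
          = fun a => min (g i a) (t.inf' ht fun j => g j a) := by
        funext a
        rw [Finset.inf'_cons]
      rw [h]
      exact Measurable.min (hg i) ih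

/-- Under the doubling condition with exponent `d ≥ 1` at `s` and
`μ (ball s 1) = 1`, there is a constant `C > 0` (depending only on `d`) such that
for every positive `m`, the expected minimum distance from `s` to `m` i.i.d. samples
from `μ` is at most `C * m ^ (-1/d)`. -/
theorem expected_min_dist_le {X : Type*} [MetricSpace X] [MeasurableSpace X] [BorelSpace X]
    (μ : Measure X) [IsProbabilityMeasure μ] (s : X) (d : ℝ) (hd : 1 ≤ d)
    (h1 : μ (ball s 1) = 1)
    (hdbl : ∀ r : ℝ, 0 < r → ∀ ε : ℝ, 0 < ε → ε ≤ 1 →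
      μ (ball s r) ≤ ENNReal.ofReal ((1 / ε) ^ d) * μ (ball s (ε * r))) :
    ∃ C : ℝ, 0 < C ∧ ∀ m : ℕ, 0 < m →
      (∫ x : Fin m → X, (⨅ j : Fin m, dist s (x j)) ∂(Measure.pi fun _ : Fin m => μ))
        ≤ C * (m : ℝ) ^ (-(1 / d)) := by
  have hd0 : 0 < d := lt_of_lt_of_le one_pos hd
  refine ⟨Real.Gamma (1 / d + 1), Real.Gamma_pos_of_pos (by positivity), ?_⟩
  intro m hm
  haveI : Nonempty (Fin m) := ⟨⟨0, hm⟩⟩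
  set ν : Measure (Fin m → X) := Measure.pi fun _ : Fin m => μ with hν
  haveI : IsProbabilityMeasure ν := by
    rw [hν]; infer_instance
  set f : (Fin m → X) → ℝ :=
    fun x => Finset.univ.inf' Finset.univ_nonempty fun j : Fin m => dist s (x j) with hf
  have hfc : (fun x : Fin m → X => ⨅ j : Fin m, dist s (x j)) = f := by
    funext x
    exact (Finset.inf'_univ_eq_ciInf _).symm
  rw [show (∫ x : Fin m → X, (⨅ j : Fin m, dist s (x j)) ∂ν)
      = ∫ x : Fin m → X, f x ∂ν from by rw [hfc]]
  -- nonnegativity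
  have f_nn : ∀ x, 0 ≤ f x := fun x =>
    Finset.le_inf' _ _ fun j _ => dist_nonneg
  -- measurability
  have f_meas : Measurable f :=
    measurable_finset_inf'_aux _ _ (fun j (x : Fin m → X) => dist s (x j))
      (fun j => ((continuous_const.dist continuous_id).measurable).comp (measurable_pi_apply j))
  -- a.e. bound by 1
  have hA : ν (Set.pi Set.univ fun _ : Fin m => ball s 1) = 1 := by
    rw [hν, Measure.pi_pi]
    simp [h1]
  have f_bd : ∀ᵐ x ∂ν, ‖f x‖ ≤ 1 := by
    have hms : MeasurableSet (Set.pi Set.univ fun _ : Fin m => ball s 1) :=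
      MeasurableSet.univ_pi fun _ => measurableSet_ball
    have hmem : ∀ᵐ x ∂ν, x ∈ Set.pi Set.univ fun _ : Fin m => ball s 1 := by
      rw [Filter.eventually_iff, mem_ae_iff]
      exact (prob_compl_eq_zero_iff hms).mpr hA
    filter_upwards [hmem] with x hx
    rw [Real.norm_of_nonneg (f_nn x)]
    have h0 : dist s (x ⟨0, hm⟩) ≤ 1 := by
      have := hx ⟨0, hm⟩ (Set.mem_univ _)
      rw [mem_ball, dist_comm] at this
      exact this.le
    exact le_trans (Finset.inf'_le _ (Finset.mem_univ ⟨0, hm⟩)) h0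
  have f_int : Integrable f ν :=
    Integrable.mono' (integrable_const 1) f_meas.aestronglyMeasurable f_bd
  -- layer cake
  rw [f_int.integral_eq_integral_meas_lt (Filter.Eventually.of_forall f_nn)]
  -- pointwise bound of tail probability
  have tail_bd : ∀ t : ℝ, 0 < t →
      (ν {x | t < f x}).toReal ≤ Real.exp (-(m : ℝ) * t ^ d) := by
    intro t ht
    have hset : {x : Fin m → X | t < f x}
        = Set.pi Set.univ fun _ : Fin m => {y : X | t < dist s y} := by
      ext x
      simp only [Set.mem_setOf_eq, Set.mem_pi, Set.mem_univ, forall_true_left, hf]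
      rw [Finset.lt_inf'_iff]
      constructor
      · intro h j; exact h j (Finset.mem_univ j)
      · intro h j _; exact h j
    have hprod : ν {x | t < f x} = (μ {y : X | t < dist s y}) ^ m := by
      rw [hset, hν, Measure.pi_pi]
      simp [Finset.prod_const]
    -- single-sample tail bound
    have hq : (μ {y : X | t < dist s y}).toReal ≤ Real.exp (-t ^ d) := by
      rcases le_or_gt 1 t with h1t | h1t
      · -- t ≥ 1 : tail is null
        have hsub : {y : X | t < dist s y} ⊆ (ball s 1)ᶜ := by
          intro y hy hball
          rw [mem_ball, dist_comm] at hball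
          exact absurd (lt_of_le_of_lt h1t hy) (not_lt.mpr hball.le)
        have hz : μ {y : X | t < dist s y} = 0 := by
          have hc : μ (ball s 1)ᶜ = 0 := (prob_compl_eq_zero_iff measurableSet_ball).mpr h1
          exact le_antisymm (le_trans (measure_mono hsub) hc.le) zero_le
        rw [hz]
        simpa using (Real.exp_pos (-t ^ d)).le
      · -- t < 1 : use doubling
        have hball_lb : ENNReal.ofReal (t ^ d) ≤ μ (ball s t) := by
          have hh := hdbl 1 one_pos t ht h1t.le
          rw [mul_one, h1] at hh
          calc ENNReal.ofReal (t ^ d)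
              = ENNReal.ofReal (t ^ d) * 1 := (mul_one _).symm
            _ ≤ ENNReal.ofReal (t ^ d) * (ENNReal.ofReal ((1 / t) ^ d) * μ (ball s t)) :=
                mul_le_mul_right hh _
            _ = ENNReal.ofReal (t ^ d * (1 / t) ^ d) * μ (ball s t) := by
                rw [← mul_assoc, ← ENNReal.ofReal_mul (by positivity)]
            _ = μ (ball s t) := by
                rw [← Real.mul_rpow ht.le (by positivity), mul_one_div_cancel ht.ne',
                  Real.one_rpow]
                simp
        have hdisj : Disjoint {y : X | t < dist s y} (ball s t) := by
          rw [Set.disjoint_left]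
          intro y hy hball
          rw [mem_ball, dist_comm] at hball
          exact absurd hball (not_lt.mpr hy.le)
        have hsum : μ {y : X | t < dist s y} + μ (ball s t) ≤ 1 := by
          rw [← measure_union hdisj measurableSet_ball]
          exact prob_le_one
        have h2 : (μ {y : X | t < dist s y}).toReal + (μ (ball s t)).toReal ≤ 1 := by
          rw [← ENNReal.toReal_add (measure_ne_top _ _) (measure_ne_top _ _)]
          exact le_trans (ENNReal.toReal_mono ENNReal.one_ne_top hsum) (by simp)
        have h3 : t ^ d ≤ (μ (ball s t)).toReal := by
          have := ENNReal.toReal_mono (measure_ne_top _ _) hball_lb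
          rwa [ENNReal.toReal_ofReal (by positivity)] at this
        have h4 : (μ {y : X | t < dist s y}).toReal ≤ 1 - t ^ d := by linarith
        refine le_trans h4 ?_
        have := Real.add_one_le_exp (-t ^ d)
        linarith
    -- raise to the m-th power
    rw [hprod, ENNReal.toReal_pow]
    calc (μ {y : X | t < dist s y}).toReal ^ m
        ≤ Real.exp (-t ^ d) ^ m :=
          pow_le_pow_left₀ ENNReal.toReal_nonneg hq m
      _ = Real.exp (-(m : ℝ) * t ^ d) := by
          rw [← Real.exp_nat_mul]
          ring_nf
  -- compare integrals
  have hmpos : (0 : ℝ) < (m : ℝ) := Nat.cast_pos.mpr hm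
  have hint_exp : IntegrableOn (fun t : ℝ => Real.exp (-(m : ℝ) * t ^ d)) (Set.Ioi 0) := by
    have := integrableOn_rpow_mul_exp_neg_mul_rpow (s := 0) (p := d) (b := (m : ℝ))
      (by norm_num) hd0 hmpos
    refine this.congr_fun (fun t ht => ?_) measurableSet_Ioi
    beta_reduce
    rw [Real.rpow_zero, one_mul]
  have key : (∫ t in Set.Ioi (0 : ℝ), (ν {x | t < f x}).toReal)
      ≤ ∫ t in Set.Ioi (0 : ℝ), Real.exp (-(m : ℝ) * t ^ d) := by
    refine integral_mono_of_nonneg ?_ hint_exp ?_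
    · exact Filter.Eventually.of_forall fun t => ENNReal.toReal_nonneg
    · rw [Filter.EventuallyLE, ae_restrict_iff' measurableSet_Ioi]
      exact Filter.Eventually.of_forall fun t ht => tail_bd t ht
  refine le_trans key ?_
  rw [integral_exp_neg_mul_rpow hd0 hmpos, neg_div, mul_comm]
end

section
/- Let (X, dist) be a metric space, μ a Borel probability measure on X, s ∈ X, and d ≥ 1 a real number. Assume μ(B(s,1)) = 1 and the doubling condition at s: for every r > 0 and every ε ∈ (0,1], μ(B(s,r)) ≤ (1/ε)^d · μ(B(s, ε·r)). Then for every positive integer m and every natural number i, the probability under the m-fold product measure μ^m that all of the m independent sample points X₁, …, X_m satisfy dist(s, X_j) > 2^(−i) (equivalently, that min_{1 ≤ j ≤ m} dist(s, X_j) > 2^(−i)) is at most (1 − 2^(−i·d))^m. -/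
/-!
Applying the doubling condition at scale `1` with ratio `r = 2 ^ (-i)` and using `μ (ball s 1) = 1`
gives `μ (ball s r) ≥ r ^ d = 2 ^ (-i * d)`. Each sample is therefore farther than `r` from `s`
with probability at most `1 - 2 ^ (-i * d)`, and independence multiplies these bounds.
-/

open MeasureTheory Metric Real

lemma ENNReal.ofReal_rpow_mul_le_of_le_inv_rpow_mul {A B : ENNReal} {ε d : ℝ} (hε : 0 < ε)
    (h : A ≤ ENNReal.ofReal ((1 / ε) ^ d) * B) : ENNReal.ofReal (ε ^ d) * A ≤ B := by
  have hinv : ε ^ d * (1 / ε) ^ d = 1 := by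
    rw [one_div, Real.inv_rpow hε.le, mul_inv_cancel₀ (rpow_pos_of_pos hε d).ne']
  calc ENNReal.ofReal (ε ^ d) * A
      ≤ ENNReal.ofReal (ε ^ d) * (ENNReal.ofReal ((1 / ε) ^ d) * B) := by gcongr
    _ = B := by
      rw [← mul_assoc, ← ENNReal.ofReal_mul (rpow_pos_of_pos hε d).le, hinv,
        ENNReal.ofReal_one, one_mul]

lemma measure_setOf_lt_dist_le_one_sub {X : Type*} [PseudoMetricSpace X] [MeasurableSpace X]
    [OpensMeasurableSpace X] (μ : Measure X) [IsProbabilityMeasure μ] (s : X) (r : ℝ) :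
    μ {y | r < dist s y} ≤ 1 - μ (ball s r) := by
  rw [← prob_compl_eq_one_sub measurableSet_ball]
  refine measure_mono fun y hy => ?_
  simpa [dist_comm] using hy.le

lemma MeasureTheory.Measure.pi_setOf_forall_mem {ι X : Type*} [Fintype ι] [MeasurableSpace X] (μ : Measure X)
    [SigmaFinite μ] (S : Set X) :
    Measure.pi (fun _ : ι => μ) {x | ∀ j, x j ∈ S} = μ S ^ Fintype.card ι := by
  rw [← Finset.card_univ, ← Finset.prod_const, ← Measure.pi_pi]
  simp [Set.pi]

theorem prob_all_far_le_general {X : Type*} [MetricSpace X] [MeasurableSpace X] [BorelSpace X]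
    (μ : Measure X) [IsProbabilityMeasure μ] (s : X) (d : ℝ)
    (h1 : μ (ball s 1) = 1)
    (hdbl : ∀ r : ℝ, 0 < r → ∀ ε : ℝ, 0 < ε → ε ≤ 1 →
      μ (ball s r) ≤ ENNReal.ofReal ((1 / ε) ^ d) * μ (ball s (ε * r))) :
    ∀ m : ℕ, 0 < m → ∀ i : ℕ,
      (Measure.pi fun _ : Fin m => μ)
          {x : Fin m → X | ∀ j : Fin m, (2 : ℝ) ^ (-(i : ℝ)) < dist s (x j)}
        ≤ ENNReal.ofReal ((1 - (2 : ℝ) ^ (-(i : ℝ) * d)) ^ m) := by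
  intro m _ i
  set r : ℝ := (2 : ℝ) ^ (-(i : ℝ))
  have hr : 0 < r := rpow_pos_of_pos two_pos _
  have hr1 : r ≤ 1 := rpow_le_one_of_one_le_of_nonpos one_le_two (by simp)
  have hball : ENNReal.ofReal (r ^ d) ≤ μ (ball s r) := by
    simpa [h1] using ENNReal.ofReal_rpow_mul_le_of_le_inv_rpow_mul hr (hdbl 1 one_pos r hr hr1)
  have hrd : r ^ d ≤ 1 := ENNReal.ofReal_le_one.mp (hball.trans prob_le_one)
  rw [rpow_mul two_pos.le]
  calc (Measure.pi fun _ : Fin m => μ) {x | ∀ j, r < dist s (x j)}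
      = μ {y | r < dist s y} ^ m := by
        simpa using Measure.pi_setOf_forall_mem (ι := Fin m) μ {y | r < dist s y}
    _ ≤ (1 - ENNReal.ofReal (r ^ d)) ^ m := by
        gcongr
        exact (measure_setOf_lt_dist_le_one_sub μ s r).trans (tsub_le_tsub_left hball 1)
    _ = ENNReal.ofReal ((1 - r ^ d) ^ m) := by
        rw [ENNReal.ofReal_pow (sub_nonneg.mpr hrd), ENNReal.ofReal_sub _ (by positivity),
          ENNReal.ofReal_one]

/-- Under the doubling condition with exponent `d ≥ 1` at `s` and
`μ (ball s 1) = 1`, for every positive `m` and every `i : ℕ`, the probability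
(under the product measure `μ^m`) that all `m` independent samples are at distance
greater than `2 ^ (-i)` from `s` is at most `(1 - 2 ^ (-i * d)) ^ m`. -/
theorem prob_all_far_le {X : Type*} [MetricSpace X] [MeasurableSpace X] [BorelSpace X]
    (μ : Measure X) [IsProbabilityMeasure μ] (s : X) (d : ℝ) (hd : 1 ≤ d)
    (h1 : μ (ball s 1) = 1)
    (hdbl : ∀ r : ℝ, 0 < r → ∀ ε : ℝ, 0 < ε → ε ≤ 1 →
      μ (ball s r) ≤ ENNReal.ofReal ((1 / ε) ^ d) * μ (ball s (ε * r))) :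
    ∀ m : ℕ, 0 < m → ∀ i : ℕ,
      (Measure.pi fun _ : Fin m => μ)
          {x : Fin m → X | ∀ j : Fin m, (2 : ℝ) ^ (-(i : ℝ)) < dist s (x j)}
        ≤ ENNReal.ofReal ((1 - (2 : ℝ) ^ (-(i : ℝ) * d)) ^ m) :=
  prob_all_far_le_general μ s d h1 hdbl
end

section
/- Let (X, dist) be a metric space, μ a Borel probability measure on X, s ∈ X, and d ≥ 1 a real number. Assume μ(B(s,1)) = 1 and the doubling condition at s: for every r > 0 and every ε ∈ (0,1], μ(B(s,r)) ≤ (1/ε)^d · μ(B(s, ε·r)). Let m be a positive integer, let X₁, …, X_m be independent samples from μ, and let M = min_{1 ≤ j ≤ m} dist(s, X_j). Then Σ_{i=0}^{∞} 2^(−i) · P(2^(−(i+1)) < M ≤ 2^(−i)) ≤ Σ_{i=0}^{∞} 2^(−i) · ((1 − 2^(−(i+1)·d))^m − (1 − 2^(−i·d))^m). -/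
/-!
Write `F t = P(M > t) = (1 - μ (closedBall s t)) ^ m` and `G t = (1 - t ^ d) ^ m`. The `i`-th
event has probability `F (2^-(i+1)) - F (2^-i)`, and summation by parts turns
`∑ 2^-i (F (2^-(i+1)) - F (2^-i))` into `∑ 2^-i F (2^-i) - 2 F 1`, and likewise for `G`.
Doubling from radius `1` gives `μ (closedBall s t) ≥ t ^ d` for `t ≤ 1`, that is `F ≤ G`, while
`G 1 = 0 ≤ F 1`.
-/

open MeasureTheory Metric Real

theorem lt_ciInf_iff_of_finite {ι α : Type*} [ConditionallyCompleteLinearOrder α] [Finite ι]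
    [Nonempty ι] {f : ι → α} {a : α} : a < ⨅ j, f j ↔ ∀ j, a < f j := by
  obtain ⟨j₀, hj₀⟩ := exists_eq_ciInf_of_finite (f := f)
  exact ⟨fun h j => h.trans_le (ciInf_le (Set.finite_range f).bddBelow j), fun h => hj₀ ▸ h j₀⟩

theorem measureReal_setOf_lt_and_le {Ω : Type*} [MeasurableSpace Ω] (ν : Measure Ω)
    [IsFiniteMeasure ν] {f : Ω → ℝ} {a b : ℝ} (hab : a ≤ b) (hb : MeasurableSet {x | b < f x}) :
    ν.real {x | a < f x ∧ f x ≤ b} = ν.real {x | a < f x} - ν.real {x | b < f x} := by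
  have hsub : {x | b < f x} ⊆ {x | a < f x} := fun x hx => hab.trans_lt hx
  rw [← measureReal_sdiff hsub hb]
  congr 1
  ext x
  simp

section MinDist

variable {X ι : Type*} [MetricSpace X] [Fintype ι] [Nonempty ι]

theorem setOf_lt_iInf_dist_eq_pi (s : X) (a : ℝ) :
    {x : ι → X | a < ⨅ j, dist s (x j)} = Set.univ.pi fun _ => (closedBall s a)ᶜ := by
  ext x
  simp [lt_ciInf_iff_of_finite, dist_comm]

variable [MeasurableSpace X] [OpensMeasurableSpace X]

theorem measurableSet_setOf_lt_iInf_dist (s : X) (a : ℝ) :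
    MeasurableSet {x : ι → X | a < ⨅ j, dist s (x j)} := by
  rw [setOf_lt_iInf_dist_eq_pi]
  exact .univ_pi fun _ => measurableSet_closedBall.compl

theorem measureReal_pi_setOf_lt_iInf_dist (μ : Measure X) [IsProbabilityMeasure μ] (s : X)
    (a : ℝ) : (Measure.pi fun _ : ι => μ).real {x | a < ⨅ j, dist s (x j)} =
      (1 - μ.real (closedBall s a)) ^ Fintype.card ι := by
  rw [setOf_lt_iInf_dist_eq_pi, measureReal_def, Measure.pi_pi, Finset.prod_const,
    ENNReal.toReal_pow, ← measureReal_def, probReal_compl_eq_one_sub measurableSet_closedBall,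
    Finset.card_univ]

theorem measureReal_pi_setOf_iInf_dist_mem_Ioc (μ : Measure X) [IsProbabilityMeasure μ] (s : X)
    {a b : ℝ} (hab : a ≤ b) :
    (Measure.pi fun _ : ι => μ).real
        {x | a < ⨅ j, dist s (x j) ∧ ⨅ j, dist s (x j) ≤ b} =
      (1 - μ.real (closedBall s a)) ^ Fintype.card ι -
        (1 - μ.real (closedBall s b)) ^ Fintype.card ι := by
  rw [measureReal_setOf_lt_and_le _ hab (measurableSet_setOf_lt_iInf_dist s b),
    measureReal_pi_setOf_lt_iInf_dist, measureReal_pi_setOf_lt_iInf_dist]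

end MinDist

theorem rpow_le_measureReal_closedBall {X : Type*} [PseudoMetricSpace X] [MeasurableSpace X]
    {μ : Measure X} [IsFiniteMeasure μ] {s : X} {d ε : ℝ} (hε : 0 < ε) (h1 : μ (ball s 1) = 1)
    (hdbl : μ (ball s 1) ≤ ENNReal.ofReal ((1 / ε) ^ d) * μ (ball s ε)) :
    ε ^ d ≤ μ.real (closedBall s ε) := by
  have hinv : ENNReal.ofReal (ε ^ d) * ENNReal.ofReal ((1 / ε) ^ d) = 1 := by
    rw [← ENNReal.ofReal_mul (by positivity), ← Real.mul_rpow hε.le (by positivity),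
      mul_one_div_cancel hε.ne', Real.one_rpow, ENNReal.ofReal_one]
  have hball : ENNReal.ofReal (ε ^ d) ≤ μ (ball s ε) :=
    calc ENNReal.ofReal (ε ^ d) = ENNReal.ofReal (ε ^ d) * μ (ball s 1) := by rw [h1, mul_one]
      _ ≤ ENNReal.ofReal (ε ^ d) * (ENNReal.ofReal ((1 / ε) ^ d) * μ (ball s ε)) := by gcongr
      _ = μ (ball s ε) := by rw [← mul_assoc, hinv, one_mul]
  exact (ENNReal.ofReal_le_iff_le_toReal (measure_ne_top μ _)).mp
    (hball.trans (measure_mono ball_subset_closedBall))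

theorem tsum_inv_two_pow_mul_sub_succ {f : ℕ → ℝ}
    (hf : Summable fun i => (2⁻¹ : ℝ) ^ i * f i) :
    ∑' i, (2⁻¹ : ℝ) ^ i * (f (i + 1) - f i) = ∑' i, (2⁻¹ : ℝ) ^ i * f i - 2 * f 0 := by
  have hshift : Summable fun i => (2⁻¹ : ℝ) ^ (i + 1) * f (i + 1) :=
    (summable_nat_add_iff 1).mpr hf
  have hsucc : ∀ i, (2⁻¹ : ℝ) ^ i * f (i + 1) = 2 * ((2⁻¹ : ℝ) ^ (i + 1) * f (i + 1)) := by
    intro i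
    rw [pow_succ]
    ring
  simp_rw [mul_sub, hsucc]
  rw [(hshift.mul_left 2).tsum_sub hf, tsum_mul_left, hf.tsum_eq_zero_add]
  ring

theorem tsum_inv_two_pow_mul_sub_succ_le {f g : ℕ → ℝ} (hf : ∀ i, 0 ≤ f i)
    (hfg : ∀ i, f i ≤ g i) (hg : ∀ i, g i ≤ 1) (h0 : g 0 ≤ f 0) :
    ∑' i, (2⁻¹ : ℝ) ^ i * (f (i + 1) - f i) ≤ ∑' i, (2⁻¹ : ℝ) ^ i * (g (i + 1) - g i) := by
  have summable {h : ℕ → ℝ} (h0 : ∀ i, 0 ≤ h i) (h1 : ∀ i, h i ≤ 1) :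
      Summable fun i => (2⁻¹ : ℝ) ^ i * h i :=
    summable_geometric_two.of_nonneg_of_le (fun i => mul_nonneg (by positivity) (h0 i))
      fun i => by
        simpa using mul_le_of_le_one_right (pow_nonneg (by norm_num : (0 : ℝ) ≤ 2⁻¹) i) (h1 i)
  have hfs := summable hf fun i => (hfg i).trans (hg i)
  have hgs := summable (fun i => (hf i).trans (hfg i)) hg
  rw [tsum_inv_two_pow_mul_sub_succ hfs, tsum_inv_two_pow_mul_sub_succ hgs]
  have := hfs.tsum_le_tsum (fun i => by have := hfg i; gcongr) hgs
  linarith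

theorem tsum_inv_two_pow_mul_one_sub_pow_sub_le {u v : ℕ → ℝ} (n : ℕ) (hu : ∀ i, 0 ≤ u i)
    (huv : ∀ i, u i ≤ v i) (hv : ∀ i, v i ≤ 1) (h0 : v 0 ≤ u 0) :
    ∑' i, (2⁻¹ : ℝ) ^ i * ((1 - v (i + 1)) ^ n - (1 - v i) ^ n) ≤
      ∑' i, (2⁻¹ : ℝ) ^ i * ((1 - u (i + 1)) ^ n - (1 - u i) ^ n) := by
  have hv' (i : ℕ) : 0 ≤ 1 - v i := sub_nonneg.2 (hv i)
  have hvu (i : ℕ) : 1 - v i ≤ 1 - u i := sub_le_sub_left (huv i) 1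
  refine tsum_inv_two_pow_mul_sub_succ_le (f := fun i => (1 - v i) ^ n)
    (g := fun i => (1 - u i) ^ n) (fun i => pow_nonneg (hv' i) n)
    (fun i => pow_le_pow_left₀ (hv' i) (hvu i) n)
    (fun i => pow_le_one₀ ((hv' i).trans (hvu i)) (sub_le_self _ (hu i))) ?_
  exact pow_le_pow_left₀ ((hv' 0).trans (hvu 0)) (sub_le_sub_left h0 1) n

theorem dyadic_sum_min_dist_le_general {X : Type*} [MetricSpace X] [MeasurableSpace X] [BorelSpace X]
    (μ : Measure X) [IsProbabilityMeasure μ] (s : X) (d : ℝ)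
    (h1 : μ (ball s 1) = 1)
    (hdbl : ∀ r : ℝ, 0 < r → ∀ ε : ℝ, 0 < ε → ε ≤ 1 →
      μ (ball s r) ≤ ENNReal.ofReal ((1 / ε) ^ d) * μ (ball s (ε * r)))
    (m : ℕ) (hm : 0 < m) :
    (∑' i : ℕ, (2 : ℝ) ^ (-(i : ℝ)) *
        ((Measure.pi fun _ : Fin m => μ)
          {x : Fin m → X |
            (2 : ℝ) ^ (-((i : ℝ) + 1)) < (⨅ j : Fin m, dist s (x j)) ∧
              (⨅ j : Fin m, dist s (x j)) ≤ (2 : ℝ) ^ (-(i : ℝ))}).toReal)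
      ≤ ∑' i : ℕ, (2 : ℝ) ^ (-(i : ℝ)) *
          ((1 - (2 : ℝ) ^ (-((i : ℝ) + 1) * d)) ^ m -
            (1 - (2 : ℝ) ^ (-(i : ℝ) * d)) ^ m) := by
  have : Nonempty (Fin m) := ⟨⟨0, hm⟩⟩
  set r : ℕ → ℝ := fun i => 2 ^ (-(i : ℝ)) with hr
  have hr_pos (i : ℕ) : 0 < r i := by positivity
  have hr_anti (i : ℕ) : r (i + 1) ≤ r i := Real.rpow_le_rpow_of_exponent_le one_le_two (by simp)
  have hr_succ (i : ℕ) : (2 : ℝ) ^ (-((i : ℝ) + 1)) = r (i + 1) := by simp only [hr, Nat.cast_succ]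
  have hweight (i : ℕ) : r i = 2⁻¹ ^ i := by simp [hr, Real.rpow_neg, inv_pow]
  have hrpow (x : ℝ) : (2 : ℝ) ^ (-x * d) = (2 ^ (-x)) ^ d := Real.rpow_mul zero_le_two _ _
  have hball (i : ℕ) : r i ^ d ≤ μ.real (closedBall s (r i)) :=
    rpow_le_measureReal_closedBall (hr_pos i) h1 <| by
      simpa using hdbl 1 one_pos _ (hr_pos i)
        (Real.rpow_le_one_of_one_le_of_nonpos one_le_two (by simp))
  calc _ = ∑' i : ℕ, 2⁻¹ ^ i * ((1 - μ.real (closedBall s (r (i + 1)))) ^ m -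
          (1 - μ.real (closedBall s (r i))) ^ m) := by
        refine tsum_congr fun i => ?_
        rw [← measureReal_def, hr_succ, measureReal_pi_setOf_iInf_dist_mem_Ioc (b := r i) _ _
          (hr_anti i), Fintype.card_fin, ← hweight]
    _ ≤ ∑' i : ℕ, 2⁻¹ ^ i * ((1 - r (i + 1) ^ d) ^ m - (1 - r i ^ d) ^ m) :=
        tsum_inv_two_pow_mul_one_sub_pow_sub_le (u := fun i => r i ^ d)
          (v := fun i => μ.real (closedBall s (r i))) m (fun i => by positivity) hball
          (fun _ => measureReal_le_one) (by simp [hr])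
    _ = _ := tsum_congr fun i => by rw [hrpow, hrpow, hr_succ, ← hweight]

/-- Lemma 1: Under the doubling condition with exponent `d ≥ 1` at `s`
and `μ (ball s 1) = 1`, with `M = min_{1 ≤ j ≤ m} dist(s, X_j)` for `m` i.i.d. samples,
`∑_{i=0}^∞ 2^(-i) * P(2^(-(i+1)) < M ≤ 2^(-i))
  ≤ ∑_{i=0}^∞ 2^(-i) * ((1 - 2^(-(i+1)d))^m - (1 - 2^(-i d))^m)`. -/
theorem dyadic_sum_min_dist_le {X : Type*} [MetricSpace X] [MeasurableSpace X] [BorelSpace X]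
    (μ : Measure X) [IsProbabilityMeasure μ] (s : X) (d : ℝ) (hd : 1 ≤ d)
    (h1 : μ (ball s 1) = 1)
    (hdbl : ∀ r : ℝ, 0 < r → ∀ ε : ℝ, 0 < ε → ε ≤ 1 →
      μ (ball s r) ≤ ENNReal.ofReal ((1 / ε) ^ d) * μ (ball s (ε * r)))
    (m : ℕ) (hm : 0 < m) :
    (∑' i : ℕ, (2 : ℝ) ^ (-(i : ℝ)) *
        ((Measure.pi fun _ : Fin m => μ)
          {x : Fin m → X |
            (2 : ℝ) ^ (-((i : ℝ) + 1)) < (⨅ j : Fin m, dist s (x j)) ∧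
              (⨅ j : Fin m, dist s (x j)) ≤ (2 : ℝ) ^ (-(i : ℝ))}).toReal)
      ≤ ∑' i : ℕ, (2 : ℝ) ^ (-(i : ℝ)) *
          ((1 - (2 : ℝ) ^ (-((i : ℝ) + 1) * d)) ^ m -
            (1 - (2 : ℝ) ^ (-(i : ℝ) * d)) ^ m) :=
  dyadic_sum_min_dist_le_general μ s d h1 hdbl m hm
end

section
/- Let m be a positive integer and d ≥ 1 a real number, and set K = ⌊(log₂ m)/d⌋. Then Σ_{i=K+1}^{∞} 2^(−i) · ((1 − 2^(−i·d))^m − (1 − 2^(−(i−1)·d))^m) ≤ m^(−1/d). -/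
open Real

/-- With `K = ⌊(log₂ m)/d⌋`, the tail sum
`∑_{i=K+1}^∞ 2^(-i) * ((1 - 2^(-i d))^m - (1 - 2^(-(i-1) d))^m)` is at most `m^(-1/d)`.
The tail is written as a sum over `n : ℕ` with `i = K + 1 + n`. -/
theorem tail_sum_le (m : ℕ) (hm : 0 < m) (d : ℝ) (hd : 1 ≤ d) :
    (∑' n : ℕ,
        (2 : ℝ) ^ (-((⌊Real.logb 2 (m : ℝ) / d⌋₊ + 1 + n : ℕ) : ℝ)) *
          ((1 - (2 : ℝ) ^ (-((⌊Real.logb 2 (m : ℝ) / d⌋₊ + 1 + n : ℕ) : ℝ) * d)) ^ m -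
            (1 - (2 : ℝ) ^ (-(((⌊Real.logb 2 (m : ℝ) / d⌋₊ + 1 + n : ℕ) : ℝ) - 1) * d)) ^ m))
      ≤ (m : ℝ) ^ (-(1 / d)) := by
  have hd0 : (0:ℝ) < d := lt_of_lt_of_le one_pos hd
  set K : ℕ := ⌊Real.logb 2 (m : ℝ) / d⌋₊ with hKdef
  set Kr : ℝ := (K : ℝ) with hKr
  have hKr0 : (0:ℝ) ≤ Kr := Nat.cast_nonneg K
  set g : ℕ → ℝ := fun j => (1 - (2:ℝ) ^ (-(Kr + (j:ℝ)) * d)) ^ m with hg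
  have hle1 : ∀ j : ℕ, (2:ℝ) ^ (-(Kr + (j:ℝ)) * d) ≤ 1 := by
    intro j
    apply Real.rpow_le_one_of_one_le_of_nonpos one_le_two
    have : (0:ℝ) ≤ (j:ℝ) := Nat.cast_nonneg j
    nlinarith
  have hgpos : ∀ j : ℕ, (0:ℝ) ≤ 1 - (2:ℝ) ^ (-(Kr + (j:ℝ)) * d) := fun j => by
    linarith [hle1 j]
  have hgmono : ∀ j : ℕ, g j ≤ g (j+1) := by
    intro j
    apply pow_le_pow_left₀ (hgpos j)
    have h2 : (2:ℝ) ^ (-(Kr + ((j:ℝ)+1)) * d) ≤ (2:ℝ) ^ (-(Kr + (j:ℝ)) * d) := by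
      apply Real.rpow_le_rpow_of_exponent_le one_le_two
      nlinarith
    push_cast
    linarith [h2]
  have hgle1 : ∀ j : ℕ, g j ≤ 1 := by
    intro j
    apply pow_le_one₀ (hgpos j)
    have := Real.rpow_pos_of_pos (two_pos) (-(Kr + (j:ℝ)) * d)
    linarith
  have hg0nonneg : (0:ℝ) ≤ g 0 := pow_nonneg (hgpos 0) m
  have hdiff_nonneg : ∀ n : ℕ, 0 ≤ g (n+1) - g n := fun n => sub_nonneg.2 (hgmono n)
  have hsum_diff : Summable (fun n => g (n+1) - g n) := by
    apply summable_of_sum_range_le hdiff_nonneg (c := 1)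
    intro N
    rw [Finset.sum_range_sub]
    linarith [hgle1 N]
  have htsum_diff : (∑' n : ℕ, (g (n+1) - g n)) ≤ 1 := by
    apply tsum_le_of_sum_range_le hdiff_nonneg
    intro N
    rw [Finset.sum_range_sub]
    linarith [hgle1 N]
  set c : ℝ := (2:ℝ) ^ (-(Kr+1)) with hc
  have hc0 : (0:ℝ) ≤ c := (Real.rpow_pos_of_pos two_pos _).le
  have key : ∀ n : ℕ,
      (2 : ℝ) ^ (-((K + 1 + n : ℕ) : ℝ)) *
        ((1 - (2 : ℝ) ^ (-((K + 1 + n : ℕ) : ℝ) * d)) ^ m -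
          (1 - (2 : ℝ) ^ (-(((K + 1 + n : ℕ) : ℝ) - 1) * d)) ^ m)
      = (2:ℝ) ^ (-(Kr + 1 + (n:ℝ))) * (g (n+1) - g n) := by
    intro n
    have e1 : ((K + 1 + n : ℕ) : ℝ) = Kr + 1 + (n:ℝ) := by push_cast; ring
    have e2 : -(Kr + 1 + (n:ℝ)) * d = -(Kr + ((n+1:ℕ):ℝ)) * d := by push_cast; ring
    have e3 : -((Kr + 1 + (n:ℝ)) - 1) * d = -(Kr + (n:ℝ)) * d := by ring
    rw [e1, e2, e3]
  have hterm_le : ∀ n : ℕ,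
      (2:ℝ) ^ (-(Kr + 1 + (n:ℝ))) * (g (n+1) - g n) ≤ c * (g (n+1) - g n) := by
    intro n
    apply mul_le_mul_of_nonneg_right _ (hdiff_nonneg n)
    apply Real.rpow_le_rpow_of_exponent_le one_le_two
    have : (0:ℝ) ≤ (n:ℝ) := Nat.cast_nonneg n
    linarith
  have hterm_nonneg : ∀ n : ℕ, 0 ≤ (2:ℝ) ^ (-(Kr + 1 + (n:ℝ))) * (g (n+1) - g n) :=
    fun n => mul_nonneg (Real.rpow_pos_of_pos two_pos _).le (hdiff_nonneg n)
  have hsum_term : Summable (fun n : ℕ => (2:ℝ) ^ (-(Kr + 1 + (n:ℝ))) * (g (n+1) - g n)) :=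
    Summable.of_nonneg_of_le hterm_nonneg hterm_le (hsum_diff.mul_left c)
  have hclast : c ≤ (m : ℝ) ^ (-(1/d)) := by
    have hm1 : (1:ℝ) ≤ (m:ℝ) := by exact_mod_cast hm
    have hmpos : (0:ℝ) < (m:ℝ) := by positivity
    have hlogb0 : 0 ≤ Real.logb 2 (m:ℝ) := Real.logb_nonneg one_lt_two hm1
    have hfloor : Real.logb 2 (m:ℝ) / d < Kr + 1 := by
      have := Nat.lt_floor_add_one (Real.logb 2 (m:ℝ) / d)
      push_cast at this ⊢
      linarith
    have h2m : (2:ℝ) ^ Real.logb 2 (m:ℝ) = (m:ℝ) :=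
      Real.rpow_logb two_pos (by norm_num) hmpos
    have hrw : (m : ℝ) ^ (-(1/d)) = (2:ℝ) ^ (Real.logb 2 (m:ℝ) * (-(1/d))) := by
      conv_lhs => rw [← h2m]
      rw [← Real.rpow_mul (by norm_num : (0:ℝ) ≤ 2)]
    rw [hrw]
    apply Real.rpow_le_rpow_of_exponent_le one_le_two
    rw [show Real.logb 2 (m:ℝ) * (-(1/d)) = -(Real.logb 2 (m:ℝ) / d) by ring]
    linarith
  calc (∑' n : ℕ,
        (2 : ℝ) ^ (-((K + 1 + n : ℕ) : ℝ)) *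
          ((1 - (2 : ℝ) ^ (-((K + 1 + n : ℕ) : ℝ) * d)) ^ m -
            (1 - (2 : ℝ) ^ (-(((K + 1 + n : ℕ) : ℝ) - 1) * d)) ^ m))
      = ∑' n : ℕ, (2:ℝ) ^ (-(Kr + 1 + (n:ℝ))) * (g (n+1) - g n) := tsum_congr key
    _ ≤ ∑' n : ℕ, c * (g (n+1) - g n) :=
        Summable.tsum_le_tsum hterm_le hsum_term (hsum_diff.mul_left c)
    _ = c * ∑' n : ℕ, (g (n+1) - g n) := tsum_mul_left
    _ ≤ c * 1 := mul_le_mul_of_nonneg_left htsum_diff hc0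
    _ = c := mul_one c
    _ ≤ (m : ℝ) ^ (-(1/d)) := hclast
end

section
/- Let m be a positive integer and d ≥ 1 a real number, and set K = ⌊(log₂ m)/d⌋. Then Σ_{i=0}^{K} 2^(−i) · exp(−m · 2^(−i·d)) ≤ (2/(e − 2)) · m^(−1/d). -/
open Real

/-- With `K = ⌊(log₂ m)/d⌋`,
`∑_{i=0}^K 2^(-i) * exp(-m * 2^(-i d)) ≤ (2/(e-2)) * m^(-1/d)`. -/
theorem head_sum_le (m : ℕ) (hm : 0 < m) (d : ℝ) (hd : 1 ≤ d) :
    ∑ i ∈ Finset.range (⌊Real.logb 2 (m : ℝ) / d⌋₊ + 1),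
        (2 : ℝ) ^ (-(i : ℝ)) * Real.exp (-(m : ℝ) * (2 : ℝ) ^ (-(i : ℝ) * d))
      ≤ (2 / (Real.exp 1 - 2)) * (m : ℝ) ^ (-(1 / d)) := by
  set K := ⌊Real.logb 2 (m : ℝ) / d⌋₊ with hK
  have hm1 : (1:ℝ) ≤ m := by exact_mod_cast hm
  have hm0 : (0:ℝ) < m := by linarith
  have hd0 : (0:ℝ) < d := lt_of_lt_of_le one_pos hd
  have hL0 : 0 ≤ Real.logb 2 (m:ℝ) := Real.logb_nonneg one_lt_two hm1
  have he : (2:ℝ) < Real.exp 1 := by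
    have := Real.exp_one_gt_d9; linarith
  have he0 : (0:ℝ) < Real.exp 1 := by linarith
  have hKd : (K:ℝ) * d ≤ Real.logb 2 (m:ℝ) := by
    have h := Nat.floor_le (show (0:ℝ) ≤ Real.logb 2 (m:ℝ) / d by positivity)
    rw [← hK] at h
    have := mul_le_mul_of_nonneg_right h (le_of_lt hd0)
    rwa [div_mul_cancel₀ _ (ne_of_gt hd0)] at this
  have h2m : (2:ℝ) ^ ((K:ℝ)*d) ≤ (m:ℝ) := by
    have hlog : (2:ℝ) ^ (Real.logb 2 (m:ℝ)) = m := Real.rpow_logb two_pos (by norm_num) hm0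
    calc (2:ℝ)^((K:ℝ)*d) ≤ (2:ℝ)^(Real.logb 2 (m:ℝ)) :=
          Real.rpow_le_rpow_of_exponent_le one_le_two hKd
      _ = m := hlog
  have hterm : ∀ i ∈ Finset.range (K+1),
      (2:ℝ)^(-(i:ℝ)) * Real.exp (-(m:ℝ) * (2:ℝ)^(-(i:ℝ)*d))
        ≤ (2:ℝ)^(-(K:ℝ)) * (Real.exp 1)⁻¹ * (2/Real.exp 1)^(K-i) := by
    intro i hi
    have hiK : i ≤ K := Nat.lt_succ_iff.mp (Finset.mem_range.mp hi)
    set n := K - i with hn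
    have hKn : (K:ℝ) - (i:ℝ) = (n:ℝ) := by
      rw [hn, Nat.cast_sub hiK]
    have hx : (n:ℝ) + 1 ≤ (m:ℝ) * (2:ℝ)^(-(i:ℝ)*d) := by
      have hpos : (0:ℝ) < (2:ℝ)^(-(i:ℝ)*d) := Real.rpow_pos_of_pos two_pos _
      have h1 : (2:ℝ)^(((K:ℝ)-(i:ℝ))*d) ≤ (m:ℝ) * (2:ℝ)^(-(i:ℝ)*d) := by
        have hmul := mul_le_mul_of_nonneg_right h2m (le_of_lt hpos)
        calc (2:ℝ)^(((K:ℝ)-(i:ℝ))*d) = (2:ℝ)^((K:ℝ)*d + (-(i:ℝ)*d)) := by ring_nf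
          _ = (2:ℝ)^((K:ℝ)*d) * (2:ℝ)^(-(i:ℝ)*d) := Real.rpow_add two_pos _ _
          _ ≤ (m:ℝ) * (2:ℝ)^(-(i:ℝ)*d) := hmul
      have h2 : (2:ℝ)^((n:ℝ)) ≤ (2:ℝ)^(((K:ℝ)-(i:ℝ))*d) := by
        apply Real.rpow_le_rpow_of_exponent_le one_le_two
        have hn0 : (0:ℝ) ≤ (n:ℝ) := Nat.cast_nonneg n
        nlinarith [hKn]
      have h3 : (n:ℝ)+1 ≤ (2:ℝ)^((n:ℝ)) := by
        rw [Real.rpow_natCast]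
        have := @Nat.lt_two_pow_self n
        have : (n:ℝ) + 1 ≤ ((2^n : ℕ) : ℝ) := by exact_mod_cast this
        simpa using this
      linarith
    have hexp : Real.exp (-(m:ℝ) * (2:ℝ)^(-(i:ℝ)*d)) ≤ Real.exp (-((n:ℝ)+1)) :=
      Real.exp_le_exp.mpr (by nlinarith)
    have h2i : (2:ℝ)^(-(i:ℝ)) = (2:ℝ)^(-(K:ℝ)) * (2:ℝ)^(n:ℕ) := by
      rw [← Real.rpow_natCast 2 n, ← Real.rpow_add two_pos]
      congr 1; rw [← hKn]; ring
    have hexp2 : Real.exp (-((n:ℝ)+1)) = (Real.exp 1)⁻¹ * ((Real.exp 1)⁻¹)^(n:ℕ) := by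
      have h4 : Real.exp (-((n:ℝ)+1)) = Real.exp (-(n:ℝ)) * Real.exp (-1) := by
        rw [← Real.exp_add]; ring_nf
      have h5 : Real.exp (-(n:ℝ)) = (Real.exp (-1))^(n:ℕ) := by
        rw [← Real.exp_nat_mul]; ring_nf
      rw [h4, h5, Real.exp_neg]
      ring
    calc (2:ℝ)^(-(i:ℝ)) * Real.exp (-(m:ℝ) * (2:ℝ)^(-(i:ℝ)*d))
        ≤ (2:ℝ)^(-(i:ℝ)) * Real.exp (-((n:ℝ)+1)) := by
          apply mul_le_mul_of_nonneg_left hexp (le_of_lt (Real.rpow_pos_of_pos two_pos _))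
      _ = (2:ℝ)^(-(K:ℝ)) * (Real.exp 1)⁻¹ * (2/Real.exp 1)^(n:ℕ) := by
          rw [h2i, hexp2, div_pow]
          field_simp
          rw [← mul_pow, one_div, inv_mul_cancel₀ (ne_of_gt he0), one_pow]
      _ = (2:ℝ)^(-(K:ℝ)) * (Real.exp 1)⁻¹ * (2/Real.exp 1)^(K-i) := by rw [hn]
  have hsum :
      ∑ i ∈ Finset.range (K+1),
        (2:ℝ)^(-(i:ℝ)) * Real.exp (-(m:ℝ) * (2:ℝ)^(-(i:ℝ)*d))
      ≤ (2:ℝ)^(-(K:ℝ)) * (Real.exp 1)⁻¹ * ∑ j ∈ Finset.range (K+1), (2/Real.exp 1)^j := by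
    calc ∑ i ∈ Finset.range (K+1),
        (2:ℝ)^(-(i:ℝ)) * Real.exp (-(m:ℝ) * (2:ℝ)^(-(i:ℝ)*d))
        ≤ ∑ i ∈ Finset.range (K+1),
            (2:ℝ)^(-(K:ℝ)) * (Real.exp 1)⁻¹ * (2/Real.exp 1)^(K-i) :=
          Finset.sum_le_sum hterm
      _ = (2:ℝ)^(-(K:ℝ)) * (Real.exp 1)⁻¹ * ∑ i ∈ Finset.range (K+1), (2/Real.exp 1)^(K-i) := by
          rw [Finset.mul_sum]
      _ = (2:ℝ)^(-(K:ℝ)) * (Real.exp 1)⁻¹ * ∑ j ∈ Finset.range (K+1), (2/Real.exp 1)^j := by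
          congr 1
          exact Finset.sum_range_reflect (fun j => (2/Real.exp 1)^j) (K+1)
  have hr0 : (0:ℝ) ≤ 2/Real.exp 1 := by positivity
  have hr1 : 2/Real.exp 1 < 1 := (div_lt_one he0).mpr he
  have hgeom : ∑ j ∈ Finset.range (K+1), (2/Real.exp 1)^j ≤ (1 - 2/Real.exp 1)⁻¹ := by
    have hsummable : Summable (fun j : ℕ => (2/Real.exp 1)^j) :=
      summable_geometric_of_lt_one hr0 hr1
    have := Summable.sum_le_tsum (Finset.range (K+1)) (fun j _ => pow_nonneg hr0 j) hsummable
    rwa [tsum_geometric_of_lt_one hr0 hr1] at this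
  have hKbound : (2:ℝ)^(-(K:ℝ)) ≤ 2 * (m:ℝ)^(-(1/d)) := by
    have hfl : Real.logb 2 (m:ℝ) / d < (K:ℝ) + 1 := by
      have h := Nat.lt_floor_add_one (Real.logb 2 (m:ℝ) / d)
      rw [hK]; linarith
    have hmr : (m:ℝ)^(-(1/d)) = (2:ℝ)^(Real.logb 2 (m:ℝ) * (-(1/d))) := by
      nth_rewrite 1 [← Real.rpow_logb two_pos (by norm_num) hm0 (x := (m:ℝ))]
      rw [← Real.rpow_mul (by norm_num : (0:ℝ) ≤ 2)]
    have hexp_le : -(K:ℝ) ≤ 1 + Real.logb 2 (m:ℝ) * (-(1/d)) := by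
      have : Real.logb 2 (m:ℝ) * (1/d) = Real.logb 2 (m:ℝ) / d := by ring
      nlinarith [hfl]
    calc (2:ℝ)^(-(K:ℝ)) ≤ (2:ℝ)^(1 + Real.logb 2 (m:ℝ) * (-(1/d))) :=
          Real.rpow_le_rpow_of_exponent_le one_le_two hexp_le
      _ = (2:ℝ)^(1:ℝ) * (2:ℝ)^(Real.logb 2 (m:ℝ) * (-(1/d))) := Real.rpow_add two_pos _ _
      _ = 2 * (m:ℝ)^(-(1/d)) := by rw [Real.rpow_one, ← hmr]
  have heq : (Real.exp 1)⁻¹ * (1 - 2/Real.exp 1)⁻¹ = (Real.exp 1 - 2)⁻¹ := by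
    rw [← mul_inv]
    congr 1
    field_simp
  have hpos2 : (0:ℝ) < (Real.exp 1 - 2)⁻¹ := inv_pos.mpr (by linarith)
  calc ∑ i ∈ Finset.range (K+1),
        (2:ℝ)^(-(i:ℝ)) * Real.exp (-(m:ℝ) * (2:ℝ)^(-(i:ℝ)*d))
      ≤ (2:ℝ)^(-(K:ℝ)) * (Real.exp 1)⁻¹ * ∑ j ∈ Finset.range (K+1), (2/Real.exp 1)^j := hsum
    _ ≤ (2:ℝ)^(-(K:ℝ)) * (Real.exp 1)⁻¹ * (1 - 2/Real.exp 1)⁻¹ := by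
        apply mul_le_mul_of_nonneg_left hgeom
        positivity
    _ = (2:ℝ)^(-(K:ℝ)) * (Real.exp 1 - 2)⁻¹ := by rw [mul_assoc, heq]
    _ ≤ (2 * (m:ℝ)^(-(1/d))) * (Real.exp 1 - 2)⁻¹ :=
        mul_le_mul_of_nonneg_right hKbound (le_of_lt hpos2)
    _ = (2 / (Real.exp 1 - 2)) * (m:ℝ)^(-(1/d)) := by ring
end

section
/- There exists a constant C > 0 such that for every real number d ≥ 1 and every positive integer m, Σ_{i=0}^{∞} 2^(−i) · ((1 − 2^(−(i+1)·d))^m − (1 − 2^(−i·d))^m) ≤ C · m^(−1/d). -/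
open Real

private lemma one_sub_pow_le_exp_aux (x : ℝ) (hx1 : x ≤ 1) (m : ℕ) :
    (1 - x) ^ m ≤ Real.exp (-((m : ℝ) * x)) := by
  have h1 : 1 - x ≤ Real.exp (-x) := by
    have := Real.add_one_le_exp (-x); linarith
  calc (1 - x) ^ m ≤ (Real.exp (-x)) ^ m := pow_le_pow_left₀ (by linarith) h1 m
    _ = Real.exp (-((m : ℝ) * x)) := by
        rw [← Real.exp_nat_mul]; ring_nf

private lemma key_j (j : ℕ) : 2 * 2 ^ j * Real.exp (-(2 : ℝ) ^ j) ≤ (3 / 4 : ℝ) ^ j := by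
  have h1 : (j : ℝ) + 1 ≤ (2 : ℝ) ^ j := by
    exact_mod_cast Nat.lt_two_pow_self (n := j)
  have h2 : Real.exp (-(2 : ℝ) ^ j) ≤ Real.exp (-((j : ℝ) + 1)) :=
    Real.exp_le_exp.2 (by linarith)
  have he : (2 : ℝ) * Real.exp (-1) ≤ 3 / 4 := by
    have h := Real.exp_one_gt_d9
    rw [Real.exp_neg]
    rw [mul_inv_le_iff₀ (by positivity)]
    nlinarith
  have hexp : Real.exp (-((j : ℝ) + 1)) = Real.exp (-1) ^ (j + 1) := by
    rw [← Real.exp_nat_mul]; push_cast; ring_nf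
  calc 2 * 2 ^ j * Real.exp (-(2 : ℝ) ^ j)
      ≤ 2 * 2 ^ j * Real.exp (-((j : ℝ) + 1)) := by
        have h0 : (0 : ℝ) ≤ 2 * 2 ^ j := by positivity
        exact mul_le_mul_of_nonneg_left h2 h0
    _ = (2 * Real.exp (-1)) ^ (j + 1) := by
        rw [hexp, mul_pow, pow_succ]; ring
    _ ≤ (3 / 4 : ℝ) ^ (j + 1) := by
        apply pow_le_pow_left₀ (by positivity) he
    _ ≤ (3 / 4 : ℝ) ^ j := by
        rw [pow_succ]
        nlinarith [pow_nonneg (by norm_num : (0:ℝ) ≤ 3/4) j]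

/-- There is a constant `C > 0` such that for every `d ≥ 1` and positive
integer `m`,
`∑_{i=0}^∞ 2^(-i) * ((1 - 2^(-(i+1) d))^m - (1 - 2^(-i d))^m) ≤ C * m^(-1/d)`. -/
theorem dominating_series_le : ∃ C : ℝ, 0 < C ∧ ∀ d : ℝ, 1 ≤ d → ∀ m : ℕ, 0 < m →
    (∑' i : ℕ, (2 : ℝ) ^ (-(i : ℝ)) *
        ((1 - (2 : ℝ) ^ (-((i : ℝ) + 1) * d)) ^ m - (1 - (2 : ℝ) ^ (-(i : ℝ) * d)) ^ m))
      ≤ C * (m : ℝ) ^ (-(1 / d)) := by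
  refine ⟨12, by norm_num, ?_⟩
  intro d hd m hm
  have hd0 : (0 : ℝ) < d := by linarith
  have hm1 : (1 : ℝ) ≤ m := by exact_mod_cast hm
  have hm0 : (0 : ℝ) < m := by linarith
  set L : ℝ := Real.logb 2 m with hLdef
  have hL0 : 0 ≤ L := Real.logb_nonneg (by norm_num) hm1
  set N : ℕ := ⌊L / d⌋₊ with hNdef
  have hN1 : (N : ℝ) * d ≤ L := by
    have h := Nat.floor_le (by positivity : (0 : ℝ) ≤ L / d)
    have : (N : ℝ) ≤ L / d := h
    calc (N : ℝ) * d ≤ (L / d) * d := by nlinarith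
      _ = L := by field_simp
  have hN2 : L / d < N + 1 := Nat.lt_floor_add_one _
  have hmN : (2 : ℝ) ^ ((N : ℝ) * d) ≤ m := by
    have h2 : (2 : ℝ) ^ L = m := Real.rpow_logb (by norm_num) (by norm_num) hm0
    calc (2 : ℝ) ^ ((N : ℝ) * d) ≤ 2 ^ L :=
          Real.rpow_le_rpow_of_exponent_le one_le_two hN1
      _ = m := h2
  have hpow : (m : ℝ) ^ (-(1 / d)) = (2 : ℝ) ^ (-(L / d)) := by
    conv_lhs => rw [← Real.rpow_logb (by norm_num : (0:ℝ) < 2) (by norm_num) hm0]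
    rw [← Real.rpow_mul (by norm_num : (0:ℝ) ≤ 2)]
    congr 1
    rw [hLdef]
    ring
  have hC : (2 : ℝ) ^ (-(N : ℝ)) ≤ 2 * (m : ℝ) ^ (-(1 / d)) := by
    rw [hpow]
    have h1 : (2 : ℝ) * (2 : ℝ) ^ (-(L / d)) = (2 : ℝ) ^ (1 - L / d) := by
      rw [show (1 : ℝ) - L / d = 1 + -(L / d) by ring, Real.rpow_add two_pos,
        Real.rpow_one]
    rw [h1]
    exact Real.rpow_le_rpow_of_exponent_le one_le_two (by linarith)
  -- basic pointwise facts
  set g : ℕ → ℝ := fun i => (2 : ℝ) ^ (-(i : ℝ)) * (1 - (2 : ℝ) ^ (-((i : ℝ) + 1) * d)) ^ m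
    with hgdef
  set f : ℕ → ℝ := fun i => (2 : ℝ) ^ (-(i : ℝ)) *
      ((1 - (2 : ℝ) ^ (-((i : ℝ) + 1) * d)) ^ m - (1 - (2 : ℝ) ^ (-(i : ℝ) * d)) ^ m)
    with hfdef
  have hA1 : ∀ i : ℕ, (2 : ℝ) ^ (-((i : ℝ) + 1) * d) ≤ 1 := by
    intro i
    apply Real.rpow_le_one_of_one_le_of_nonpos one_le_two
    have : (0:ℝ) ≤ (i : ℝ) := i.cast_nonneg
    nlinarith
  have hB1 : ∀ i : ℕ, (2 : ℝ) ^ (-(i : ℝ) * d) ≤ 1 := by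
    intro i
    apply Real.rpow_le_one_of_one_le_of_nonpos one_le_two
    have : (0:ℝ) ≤ (i : ℝ) := i.cast_nonneg
    nlinarith
  have hmono : ∀ i : ℕ, (2 : ℝ) ^ (-((i : ℝ) + 1) * d) ≤ (2 : ℝ) ^ (-(i : ℝ) * d) := by
    intro i
    apply Real.rpow_le_rpow_of_exponent_le one_le_two
    nlinarith
  have hhalf : ∀ i : ℕ, (2 : ℝ) ^ (-(i : ℝ)) = (1 / 2 : ℝ) ^ i := by
    intro i
    rw [Real.rpow_neg (by norm_num), Real.rpow_natCast, one_div, inv_pow]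
  have hg_nonneg : ∀ i, 0 ≤ g i := by
    intro i
    apply mul_nonneg (Real.rpow_nonneg (by norm_num) _)
    apply pow_nonneg
    have := hA1 i; linarith
  have hg_le : ∀ i, g i ≤ (1 / 2 : ℝ) ^ i := by
    intro i
    rw [hgdef]
    simp only
    rw [hhalf i]
    have h1 : (1 - (2 : ℝ) ^ (-((i : ℝ) + 1) * d)) ^ m ≤ 1 := by
      apply pow_le_one₀
      · have := hA1 i; linarith
      · have := Real.rpow_nonneg (by norm_num : (0:ℝ) ≤ 2) (-((i : ℝ) + 1) * d); linarith
    nlinarith [pow_nonneg (by norm_num : (0:ℝ) ≤ 1/2) i]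
  have hg_sum : Summable g :=
    Summable.of_nonneg_of_le hg_nonneg hg_le
      (summable_geometric_of_lt_one (by norm_num) (by norm_num))
  have hfg : ∀ i, f i ≤ g i := by
    intro i
    rw [hfdef, hgdef]
    simp only
    have hB0 : 0 ≤ (1 - (2 : ℝ) ^ (-(i : ℝ) * d)) ^ m := by
      apply pow_nonneg; have := hB1 i; linarith
    have h2 : (0:ℝ) ≤ (2 : ℝ) ^ (-(i : ℝ)) := Real.rpow_nonneg (by norm_num) _
    nlinarith
  have hf_nonneg : ∀ i, 0 ≤ f i := by
    intro i
    rw [hfdef]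
    simp only
    apply mul_nonneg (Real.rpow_nonneg (by norm_num) _)
    have hle : (1 - (2 : ℝ) ^ (-(i : ℝ) * d)) ^ m ≤ (1 - (2 : ℝ) ^ (-((i:ℝ) + 1) * d)) ^ m := by
      apply pow_le_pow_left₀
      · have := hB1 i; linarith
      · have := hmono i; linarith
    linarith
  have hf_sum : Summable f := Summable.of_nonneg_of_le hf_nonneg hfg hg_sum
  have key : ∑' i, f i ≤ ∑' i, g i := Summable.tsum_le_tsum hfg hf_sum hg_sum
  -- tail bound
  have htail : ∑' i : ℕ, g (i + N) ≤ 2 * (2 : ℝ) ^ (-(N : ℝ)) := by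
    have h1 : ∀ i : ℕ, g (i + N) ≤ (2 : ℝ) ^ (-(N : ℝ)) * (1 / 2 : ℝ) ^ i := by
      intro i
      calc g (i + N) ≤ (1 / 2 : ℝ) ^ (i + N) := hg_le _
        _ = (2 : ℝ) ^ (-(N : ℝ)) * (1 / 2 : ℝ) ^ i := by
            rw [pow_add, hhalf N]; ring
    calc ∑' i : ℕ, g (i + N) ≤ ∑' i : ℕ, (2 : ℝ) ^ (-(N : ℝ)) * (1 / 2 : ℝ) ^ i := by
          apply Summable.tsum_le_tsum h1 ((summable_nat_add_iff N).2 hg_sum)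
          exact (summable_geometric_of_lt_one (by norm_num) (by norm_num)).mul_left _
      _ = (2 : ℝ) ^ (-(N : ℝ)) * ∑' i : ℕ, (1 / 2 : ℝ) ^ i := tsum_mul_left
      _ = (2 : ℝ) ^ (-(N : ℝ)) * 2 := by
          rw [tsum_geometric_of_lt_one (by norm_num) (by norm_num)]; norm_num
      _ = 2 * (2 : ℝ) ^ (-(N : ℝ)) := by ring
  -- head bound
  have hhead : ∑ i ∈ Finset.range N, g i ≤ 4 * (2 : ℝ) ^ (-(N : ℝ)) := by
    have step1 : ∀ i ∈ Finset.range N,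
        g i ≤ (2 : ℝ) ^ (-(N : ℝ)) * (3 / 4 : ℝ) ^ (N - 1 - i) := by
      intro i hi
      have hiN : i < N := Finset.mem_range.mp hi
      have hi1 : (i : ℝ) + 1 ≤ N := by exact_mod_cast hiN
      set j : ℕ := N - 1 - i with hjdef
      have hj : (j : ℝ) = (N : ℝ) - 1 - (i : ℝ) := by
        rw [hjdef, Nat.cast_sub (by omega), Nat.cast_sub (by omega)]
        norm_num
      -- m * A ≥ 2^j
      have hA0 : (0:ℝ) ≤ (2 : ℝ) ^ (-((i : ℝ) + 1) * d) := Real.rpow_nonneg (by norm_num) _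
      have claim1 : (2 : ℝ) ^ (j : ℕ) ≤ (m : ℝ) * (2 : ℝ) ^ (-((i : ℝ) + 1) * d) := by
        have e1 : (2 : ℝ) ^ ((N : ℝ) * d) * (2 : ℝ) ^ (-((i : ℝ) + 1) * d)
            = (2 : ℝ) ^ (((N : ℝ) - i - 1) * d) := by
          rw [← Real.rpow_add two_pos]; ring_nf
        have e2 : (2 : ℝ) ^ ((N : ℝ) - i - 1) ≤ (2 : ℝ) ^ (((N : ℝ) - i - 1) * d) := by
          apply Real.rpow_le_rpow_of_exponent_le one_le_two
          nlinarith
        have e3 : (2 : ℝ) ^ (j : ℕ) = (2 : ℝ) ^ ((N : ℝ) - i - 1) := by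
          rw [← Real.rpow_natCast 2 j, hj]; ring_nf
        have e4 : (2 : ℝ) ^ ((N : ℝ) * d) * (2 : ℝ) ^ (-((i : ℝ) + 1) * d)
            ≤ (m : ℝ) * (2 : ℝ) ^ (-((i : ℝ) + 1) * d) :=
          mul_le_mul_of_nonneg_right hmN hA0
        rw [e3]
        calc (2 : ℝ) ^ ((N : ℝ) - i - 1) ≤ (2 : ℝ) ^ (((N : ℝ) - i - 1) * d) := e2
          _ = (2 : ℝ) ^ ((N : ℝ) * d) * (2 : ℝ) ^ (-((i : ℝ) + 1) * d) := e1.symm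
          _ ≤ (m : ℝ) * (2 : ℝ) ^ (-((i : ℝ) + 1) * d) := e4
      have claim2 : (1 - (2 : ℝ) ^ (-((i : ℝ) + 1) * d)) ^ m ≤ Real.exp (-(2 : ℝ) ^ (j : ℕ)) := by
        calc (1 - (2 : ℝ) ^ (-((i : ℝ) + 1) * d)) ^ m
            ≤ Real.exp (-((m : ℝ) * (2 : ℝ) ^ (-((i : ℝ) + 1) * d))) :=
              one_sub_pow_le_exp_aux _ (hA1 i) m
          _ ≤ Real.exp (-(2 : ℝ) ^ (j : ℕ)) := Real.exp_le_exp.2 (by linarith)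
      have hsplit : (2 : ℝ) ^ (-(i : ℝ)) = (2 : ℝ) ^ (-(N : ℝ)) * (2 * (2:ℝ) ^ (j : ℕ)) := by
        have h2j : (2:ℝ) * (2:ℝ) ^ (j : ℕ) = (2:ℝ) ^ ((j:ℝ) + 1) := by
          rw [Real.rpow_add two_pos, Real.rpow_one, Real.rpow_natCast]; ring
        rw [h2j, ← Real.rpow_add two_pos]
        congr 1
        rw [hj]; ring
      rw [hgdef]
      simp only
      calc (2 : ℝ) ^ (-(i : ℝ)) * (1 - (2 : ℝ) ^ (-((i : ℝ) + 1) * d)) ^ m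
          ≤ (2 : ℝ) ^ (-(i : ℝ)) * Real.exp (-(2 : ℝ) ^ (j : ℕ)) := by
            apply mul_le_mul_of_nonneg_left claim2 (Real.rpow_nonneg (by norm_num) _)
        _ = (2 : ℝ) ^ (-(N : ℝ)) * (2 * 2 ^ (j : ℕ) * Real.exp (-(2 : ℝ) ^ (j : ℕ))) := by
            rw [hsplit]; ring
        _ ≤ (2 : ℝ) ^ (-(N : ℝ)) * (3 / 4 : ℝ) ^ (j : ℕ) := by
            apply mul_le_mul_of_nonneg_left (key_j j) (Real.rpow_nonneg (by norm_num) _)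
    calc ∑ i ∈ Finset.range N, g i
        ≤ ∑ i ∈ Finset.range N, (2 : ℝ) ^ (-(N : ℝ)) * (3 / 4 : ℝ) ^ (N - 1 - i) :=
          Finset.sum_le_sum step1
      _ = (2 : ℝ) ^ (-(N : ℝ)) * ∑ i ∈ Finset.range N, (3 / 4 : ℝ) ^ (N - 1 - i) := by
          rw [Finset.mul_sum]
      _ = (2 : ℝ) ^ (-(N : ℝ)) * ∑ j ∈ Finset.range N, (3 / 4 : ℝ) ^ j := by
          rw [Finset.sum_range_reflect]
      _ ≤ (2 : ℝ) ^ (-(N : ℝ)) * 4 := by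
          apply mul_le_mul_of_nonneg_left _ (Real.rpow_nonneg (by norm_num) _)
          calc ∑ j ∈ Finset.range N, (3 / 4 : ℝ) ^ j
              ≤ ∑' j : ℕ, (3 / 4 : ℝ) ^ j :=
                Summable.sum_le_tsum _ (fun i _ => by positivity)
                  (summable_geometric_of_lt_one (by norm_num) (by norm_num))
            _ = 4 := by rw [tsum_geometric_of_lt_one (by norm_num) (by norm_num)]; norm_num
      _ = 4 * (2 : ℝ) ^ (-(N : ℝ)) := by ring
  have hsplit_sum : ∑' i, g i ≤ 6 * (2 : ℝ) ^ (-(N : ℝ)) := by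
    rw [← Summable.sum_add_tsum_nat_add N hg_sum]
    linarith
  calc (∑' i : ℕ, (2 : ℝ) ^ (-(i : ℝ)) *
        ((1 - (2 : ℝ) ^ (-((i : ℝ) + 1) * d)) ^ m - (1 - (2 : ℝ) ^ (-(i : ℝ) * d)) ^ m))
      = ∑' i, f i := by rw [hfdef]
    _ ≤ ∑' i, g i := key
    _ ≤ 6 * (2 : ℝ) ^ (-(N : ℝ)) := hsplit_sum
    _ ≤ 6 * (2 * (m : ℝ) ^ (-(1 / d))) := by
        apply mul_le_mul_of_nonneg_left hC (by norm_num)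
    _ = 12 * (m : ℝ) ^ (-(1 / d)) := by ring
end
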